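/- arXiv:1004.3714 — 3 statements merged into one kernel-verified Lean document; each statement's English description precedes it below -/
import Mathlib

section
/- The determinant of the m×m symmetric tridiagonal matrix with diagonal entries n_i + n_{i+1} and off-diagonal entries −n_{i+1} (for positive reals n_1,…,n_{m+1}) equals (∏_{i=1}^{m+1} n_i)·(∑_{i=1}^{m+1} 1/n_i). -/
/-!
Expanding along the first row, and then the second of the two resulting minors along its first
column, gives the continuant recurrence
`D_{m+2}(n₀, n₁, …) = (n₀ + n₁) D_{m+1}(n₁, n₂, …) - n₁² D_m(n₂, n₃, …)`.
The right-hand side `(∏ nᵢ) (∑ 1 / nᵢ)` satisfies the same recurrence and the same initial values.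
-/

open Finset

theorem prod_mul_sum_one_div_range_succ_succ {K : Type*} [Field K] (m : ℕ) (n : ℕ → K)
    (h0 : n 0 ≠ 0) (h1 : n 1 ≠ 0) :
    (∏ i ∈ range (m + 3), n i) * ∑ i ∈ range (m + 3), 1 / n i =
      (n 0 + n 1) * ((∏ i ∈ range (m + 2), n (i + 1)) * ∑ i ∈ range (m + 2), 1 / n (i + 1)) -
        n 1 ^ 2 * ((∏ i ∈ range (m + 1), n (i + 2)) * ∑ i ∈ range (m + 1), 1 / n (i + 2)) := by
  simp only [prod_range_succ' _ (m + 2), sum_range_succ' _ (m + 2), prod_range_succ' _ (m + 1),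
    sum_range_succ' _ (m + 1)]
  field_simp
  ring

namespace Matrix

/-- The weights form a sequence so that dropping the first one is `n <| · + 1`;
only `n 0, …, n m` enter. -/
def weightedTridiag {R : Type*} [Ring R] (m : ℕ) (n : ℕ → R) : Matrix (Fin m) (Fin m) R :=
  of fun i j =>
    if (i : ℕ) = j then n i + n (i + 1)
    else if (i : ℕ) + 1 = j then -n j
    else if (j : ℕ) + 1 = i then -n i
    else 0

section CommRing

variable {R : Type*} [CommRing R] {m : ℕ} (n : ℕ → R)

theorem weightedTridiag_submatrix_succ_succ :
    (weightedTridiag (m + 1) n).submatrix Fin.succ Fin.succ = weightedTridiag m (n <| · + 1) := by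
  ext i j
  simp only [weightedTridiag, submatrix_apply, of_apply, Fin.val_succ]
  split_ifs <;> first | rfl | omega

theorem det_weightedTridiag_succ_succ :
    (weightedTridiag (m + 2) n).det =
      (n 0 + n 1) * (weightedTridiag (m + 1) (n <| · + 1)).det -
        n 1 ^ 2 * (weightedTridiag m (n <| · + 2)).det := by
  set T := weightedTridiag (m + 2) n
  have h00 : T 0 0 = n 0 + n 1 := by simp [T, weightedTridiag]
  have h01 : T 0 1 = -n 1 := by simp [T, weightedTridiag]
  have h10 : T 1 0 = -n 1 := by simp [T, weightedTridiag]
  have hminor : (T.submatrix Fin.succ (Fin.succAbove 1)).det =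
      -n 1 * (weightedTridiag m (n <| · + 2)).det := by
    have hsub : (T.submatrix Fin.succ (Fin.succAbove 1)).submatrix Fin.succ Fin.succ =
        weightedTridiag m (n <| · + 2) := by
      rw [submatrix_submatrix, show (Fin.succAbove 1 ∘ Fin.succ : Fin m → _) = Fin.succ ∘ Fin.succ
        from funext Fin.one_succAbove_succ, ← submatrix_submatrix,
        weightedTridiag_submatrix_succ_succ, weightedTridiag_submatrix_succ_succ]
    rw [det_succ_column_zero, Fin.sum_univ_succ, sum_eq_zero, Fin.succAbove_zero, hsub]
    · simp [h10]
    · intro i _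
      simp [T, weightedTridiag]
  rw [det_succ_row_zero, Fin.sum_univ_succ, Fin.sum_univ_succ, sum_eq_zero, Fin.succAbove_zero,
    Fin.succ_zero_eq_one, weightedTridiag_submatrix_succ_succ, hminor, h00, h01]
  · simp only [Fin.val_zero, Fin.val_one, pow_zero, pow_one]
    ring
  · intro j _
    simp [T, weightedTridiag]

end CommRing

theorem det_weightedTridiag {K : Type*} [Field K] :
    ∀ (m : ℕ) (n : ℕ → K), (∀ i ≤ m, n i ≠ 0) →
      (weightedTridiag m n).det = (∏ i ∈ range (m + 1), n i) * ∑ i ∈ range (m + 1), 1 / n i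
  | 0, n, hn => by simp [hn 0 le_rfl]
  | 1, n, hn => by
    rw [det_fin_one, prod_range_succ, prod_range_one, sum_range_succ, sum_range_one]
    simp only [weightedTridiag, of_apply, Fin.val_zero, ↓reduceIte, zero_add]
    field_simp [hn 0 zero_le_one, hn 1 le_rfl]
    ring
  | m + 2, n, hn => by
    rw [det_weightedTridiag_succ_succ,
      det_weightedTridiag (m + 1) _ fun i hi ↦ hn (i + 1) (by omega),
      det_weightedTridiag m _ fun i hi ↦ hn (i + 2) (by omega),
      prod_mul_sum_one_div_range_succ_succ m n (hn 0 (by omega)) (hn 1 (by omega))]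

end Matrix

/-- Determinant of the tridiagonal matrix with diagonal `n i + n (i+1)` and
off-diagonal `-n (i+1)` equals `(∏ n i) * (∑ 1/(n i))`. -/
theorem det_weighted_tridiag (m : ℕ) (n : Fin (m + 1) → ℝ)
    (hn : ∀ i, 0 < n i)
    (A : Matrix (Fin m) (Fin m) ℝ)
    (hA : ∀ i j : Fin m,
      A i j =
        if i = j then n i.castSucc + n i.succ
        else if (i : ℕ) + 1 = j then -n j.castSucc
        else if (j : ℕ) + 1 = i then -n i.castSucc
        else 0) :
    A.det = (∏ i, n i) * (∑ i, 1 / n i) := by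
  set N : ℕ → ℝ := fun k ↦ if h : k < m + 1 then n ⟨k, h⟩ else 0
  have hN : ∀ i : Fin (m + 1), N i = n i := fun i ↦ dif_pos i.isLt
  have hA' : A = Matrix.weightedTridiag m N := by
    ext i j
    simp only [hA, Matrix.weightedTridiag, Matrix.of_apply, Fin.ext_iff, ← hN, Fin.val_castSucc,
      Fin.val_succ]
  have hN0 : ∀ i ≤ m, N i ≠ 0 := fun i hi ↦ (hN ⟨i, by omega⟩).trans_ne (hn _).ne'
  rw [hA', Matrix.det_weightedTridiag m N hN0, ← Fin.prod_univ_eq_prod_range,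
    ← Fin.sum_univ_eq_sum_range]
  simp only [hN]
end

section
/- For any a > R^2/(m+1), the Lebesgue measure in ℝ^{2m} of the set {Z_m = (x_1,y_1,…,x_m,y_m) : d_m(Z_m) ≤ a} equals π^m (a − R^2/(m+1))^m / (m+1)!. -/
/-!
Write each relay as the equally spaced point `-R/2 + (i+1) R/(m+2)` of the segment plus a
displacement. The cross term telescopes away and the constant `R²/(m+2)` splits off, leaving in
both coordinates the energy `pathEnergy` of a path pinned to `0` at both ends. That quadratic
form is `‖L w‖²` for an explicit upper bidiagonal Cholesky factor `L` with `det L = √(m+2)`, so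
the sublevel set is the preimage under `L × L` of a Euclidean ball in dimension `2(m+1)`, and its
volume is the ball's volume divided by `m+2`.
-/

open MeasureTheory Real

theorem Fin.sum_succ_sub_castSucc {M : Type*} [AddCommGroup M] {n : ℕ} (w : Fin (n + 1) → M) :
    ∑ i : Fin n, (w i.succ - w i.castSucc) = w (Fin.last n) - w 0 := by
  rw [Finset.sum_sub_distrib, sub_eq_sub_iff_add_eq_add, add_comm, ← Fin.sum_univ_succ,
    Fin.sum_univ_castSucc, add_comm]

theorem volume_setOf_sum_sq_le {ι : Type*} [Fintype ι] [Nonempty ι] {k : ℕ}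
    (hk : Fintype.card ι = 2 * k) {r : ℝ} (hr : 0 ≤ r) :
    volume {w : ι → ℝ | ∑ i, w i ^ 2 ≤ r} = ENNReal.ofReal (π ^ k * r ^ k / k.factorial) := by
  have hball : {w : ι → ℝ | ∑ i, w i ^ 2 ≤ r} =
      WithLp.toLp 2 ⁻¹' Metric.closedBall (0 : EuclideanSpace ℝ ι) √r := by
    ext w
    simp [Real.le_sqrt (norm_nonneg _) hr, EuclideanSpace.norm_sq_eq]
  rw [hball, (PiLp.volume_preserving_toLp ι).measure_preimage
      measurableSet_closedBall.nullMeasurableSet,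
    InnerProductSpace.volume_closedBall_of_dim_even (by rw [finrank_euclideanSpace, hk]),
    finrank_euclideanSpace, hk, ← ENNReal.ofReal_pow (sqrt_nonneg r), pow_mul, sq_sqrt hr,
    ← ENNReal.ofReal_mul (by positivity)]
  congr 1
  ring

theorem volume_prod_setOf_sum_sq_le {ι : Type*} [Fintype ι] [Nonempty ι] {r : ℝ} (hr : 0 ≤ r) :
    volume {z : (ι → ℝ) × (ι → ℝ) | ∑ i, z.1 i ^ 2 + ∑ i, z.2 i ^ 2 ≤ r} =
      ENNReal.ofReal (π ^ Fintype.card ι * r ^ Fintype.card ι / (Fintype.card ι).factorial) := by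
  rw [← (volume_measurePreserving_sumPiEquivProdPi fun _ : ι ⊕ ι => ℝ).measure_preimage_equiv]
  convert volume_setOf_sum_sq_le (ι := ι ⊕ ι) (by rw [Fintype.card_sum, two_mul]) hr using 2
  ext w
  simp [MeasurableEquiv.coe_sumPiEquivProdPi, Fintype.sum_sum_type]

def pathEnergy (n : ℕ) (w : Fin (n + 1) → ℝ) : ℝ :=
  w 0 ^ 2 + ∑ i : Fin n, (w i.succ - w i.castSucc) ^ 2 + w (Fin.last n) ^ 2

/-- The one-coordinate part of `d_m`, for the route from `-R/2` through `x 0, …, x n` to `R/2`. -/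
noncomputable def hopEnergy (n : ℕ) (R : ℝ) (x : Fin (n + 1) → ℝ) : ℝ :=
  (x 0 + R / 2) ^ 2 + ∑ i : Fin n, (x i.succ - x i.castSucc) ^ 2 + (x (Fin.last n) - R / 2) ^ 2

noncomputable def equispacedRelays (n : ℕ) (R : ℝ) (i : Fin (n + 1)) : ℝ :=
  R * ((i + 1) / (n + 2) - 1 / 2)

theorem hopEnergy_add_equispacedRelays (n : ℕ) (R : ℝ) (w : Fin (n + 1) → ℝ) :
    hopEnergy n R (w + equispacedRelays n R) = pathEnergy n w + R ^ 2 / (n + 2) := by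
  set h := R / (n + 2)
  have hfirst : equispacedRelays n R 0 + R / 2 = h := by
    simp only [equispacedRelays, Fin.val_zero, h]
    ring
  have hlast : equispacedRelays n R (Fin.last n) - R / 2 = -h := by
    simp only [equispacedRelays, Fin.val_last, h]
    field_simp
    ring
  have hstep (i : Fin n) : equispacedRelays n R i.succ - equispacedRelays n R i.castSucc = h := by
    simp only [equispacedRelays, Fin.val_succ, Fin.val_castSucc, h]
    push_cast
    field_simp
    ring
  have hsum : ∑ i : Fin n, ((w + equispacedRelays n R) i.succ -
        (w + equispacedRelays n R) i.castSucc) ^ 2 =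
      ∑ i : Fin n, (w i.succ - w i.castSucc) ^ 2 + 2 * h * (w (Fin.last n) - w 0) + n * h ^ 2 := by
    simp only [Pi.add_apply, add_sub_add_comm, hstep, add_sq, Finset.sum_add_distrib,
      ← Finset.sum_mul, ← Finset.mul_sum, Fin.sum_succ_sub_castSucc, Finset.sum_const,
      Finset.card_univ, Fintype.card_fin, nsmul_eq_mul]
    ring
  have hconst : R ^ 2 / (n + 2) = (n + 2) * h ^ 2 := by
    simp only [h]
    field_simp
  rw [hopEnergy, hsum, pathEnergy, hconst, Pi.add_apply, Pi.add_apply, add_assoc (w 0), hfirst,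
    add_sub_assoc, hlast]
  ring

/-- `(i + 2) / (i + 1)` are the pivots of Gaussian elimination on the tridiagonal matrix
`tridiag(-1, 2, -1)` of `pathEnergy`. -/
noncomputable def pathCholeskyDiag (i : ℕ) : ℝ := √((i + 2) / (i + 1))

lemma pathCholeskyDiag_sq (i : ℕ) : pathCholeskyDiag i ^ 2 = (i + 2) / (i + 1) :=
  sq_sqrt (by positivity)

lemma pathCholeskyDiag_inv_sq (i : ℕ) : (pathCholeskyDiag i)⁻¹ ^ 2 = (i + 1) / (i + 2) := by
  rw [inv_pow, pathCholeskyDiag_sq, inv_div]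

lemma pathCholeskyDiag_ne_zero (i : ℕ) : pathCholeskyDiag i ≠ 0 := by
  unfold pathCholeskyDiag
  positivity

lemma prod_range_pathCholeskyDiag (k : ℕ) :
    ∏ i ∈ Finset.range k, pathCholeskyDiag i = √(k + 1) := by
  induction k with
  | zero => simp
  | succ k ih =>
    rw [Finset.prod_range_succ, ih, pathCholeskyDiag, ← sqrt_mul (by positivity)]
    congr 1
    field_simp
    push_cast
    ring

noncomputable def pathCholesky (n : ℕ) : (Fin (n + 1) → ℝ) →ₗ[ℝ] (Fin (n + 1) → ℝ) :=
  LinearMap.pi <| Fin.lastCases (pathCholeskyDiag n • LinearMap.proj (Fin.last n)) fun i =>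
    pathCholeskyDiag i • LinearMap.proj i.castSucc - (pathCholeskyDiag i)⁻¹ • LinearMap.proj i.succ

@[simp]
lemma pathCholesky_apply_last (n : ℕ) (w : Fin (n + 1) → ℝ) :
    pathCholesky n w (Fin.last n) = pathCholeskyDiag n * w (Fin.last n) := by
  simp [pathCholesky]

@[simp]
lemma pathCholesky_apply_castSucc (n : ℕ) (w : Fin (n + 1) → ℝ) (i : Fin n) :
    pathCholesky n w i.castSucc =
      pathCholeskyDiag i * w i.castSucc - (pathCholeskyDiag i)⁻¹ * w i.succ := by
  simp [pathCholesky]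

lemma pathCholesky_isUpperTriangular (n : ℕ) :
    (LinearMap.toMatrix' (pathCholesky n)).IsUpperTriangular := by
  intro i j (hji : j < i)
  rw [LinearMap.toMatrix'_apply]
  induction i using Fin.lastCases with
  | last => simp [Pi.single_eq_of_ne hji.ne']
  | cast i =>
    have hj : j < i.succ := hji.trans Fin.castSucc_lt_succ
    simp [Pi.single_eq_of_ne hji.ne', Pi.single_eq_of_ne hj.ne']

theorem det_pathCholesky (n : ℕ) : LinearMap.det (pathCholesky n) = √(n + 2) := by
  have hdiag (i : Fin (n + 1)) :
      LinearMap.toMatrix' (pathCholesky n) i i = pathCholeskyDiag i := by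
    rw [LinearMap.toMatrix'_apply]
    induction i using Fin.lastCases with
    | last => simp
    | cast i => simp [Pi.single_eq_of_ne Fin.castSucc_lt_succ.ne']
  rw [← LinearMap.det_toMatrix', Matrix.det_of_isUpperTriangular (pathCholesky_isUpperTriangular n),
    Finset.prod_congr rfl fun i _ => hdiag i,
    Fin.prod_univ_eq_prod_range (fun i => pathCholeskyDiag i), prod_range_pathCholeskyDiag]
  congr 1
  push_cast
  ring

lemma sum_sq_pathCholesky_rows (n : ℕ) (w : Fin (n + 1) → ℝ) :
    ∑ i : Fin n, (pathCholeskyDiag i * w i.castSucc - (pathCholeskyDiag i)⁻¹ * w i.succ) ^ 2 +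
      pathCholeskyDiag n ^ 2 * w (Fin.last n) ^ 2 = pathEnergy n w := by
  induction n with
  | zero =>
    simp only [pathEnergy, Finset.univ_eq_empty, Finset.sum_empty, Fin.last_zero,
      pathCholeskyDiag_sq, Nat.cast_zero]
    ring
  | succ n ih =>
    have hpivot : pathCholeskyDiag (n + 1) ^ 2 + (pathCholeskyDiag n)⁻¹ ^ 2 = 2 := by
      rw [pathCholeskyDiag_sq, pathCholeskyDiag_inv_sq]
      field_simp
      push_cast
      ring
    have hinv : pathCholeskyDiag n * (pathCholeskyDiag n)⁻¹ = 1 :=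
      mul_inv_cancel₀ (pathCholeskyDiag_ne_zero n)
    have hinit := ih fun i => w i.castSucc
    simp only [pathEnergy, Fin.sum_univ_castSucc, Fin.succ_castSucc, Fin.castSucc_zero,
      Fin.succ_last, Fin.val_castSucc, Fin.val_last] at hinit ⊢
    linear_combination hinit - 2 * w (Fin.last n).castSucc * w (Fin.last (n + 1)) * hinv +
      w (Fin.last (n + 1)) ^ 2 * hpivot

theorem sum_sq_pathCholesky (n : ℕ) (w : Fin (n + 1) → ℝ) :
    ∑ j, pathCholesky n w j ^ 2 = pathEnergy n w := by
  rw [Fin.sum_univ_castSucc, ← sum_sq_pathCholesky_rows]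
  simp [mul_pow]

theorem volume_dm_sublevel_general (m : ℕ) (R a : ℝ)
    (ha : R ^ 2 / (m + 2) < a) :
    volume {z : (Fin (m + 1) → ℝ) × (Fin (m + 1) → ℝ) |
        (z.1 0 + R / 2) ^ 2 + (∑ i : Fin m, (z.1 i.succ - z.1 i.castSucc) ^ 2) +
            (z.1 (Fin.last m) - R / 2) ^ 2 +
          ((z.2 0) ^ 2 + (∑ i : Fin m, (z.2 i.succ - z.2 i.castSucc) ^ 2) +
            (z.2 (Fin.last m)) ^ 2) ≤ a} =
      ENNReal.ofReal
        (Real.pi ^ (m + 1) * (a - R ^ 2 / (m + 2)) ^ (m + 1) /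
          (Nat.factorial (m + 2))) := by
  set L := (pathCholesky m).prodMap (pathCholesky m)
  have hdet : LinearMap.det L = m + 2 := by
    rw [LinearMap.det_prodMap, det_pathCholesky, mul_self_sqrt (by positivity)]
  have hset : (· + (equispacedRelays m R, 0)) ⁻¹'
        {z | hopEnergy m R z.1 + pathEnergy m z.2 ≤ a} =
      L ⁻¹' {z | ∑ i, z.1 i ^ 2 + ∑ i, z.2 i ^ 2 ≤ a - R ^ 2 / (m + 2)} := by
    ext z
    simp only [Set.mem_preimage, Set.mem_ofPred_eq, Prod.fst_add, Prod.snd_add, add_zero,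
      hopEnergy_add_equispacedRelays, L, LinearMap.prodMap_apply, sum_sq_pathCholesky]
    rw [le_sub_iff_add_le, add_right_comm]
  -- instance search does not find this one by itself
  have := Measure.prod.instIsAddHaarMeasure (volume : Measure (Fin (m + 1) → ℝ))
    (volume : Measure (Fin (m + 1) → ℝ))
  change volume {z : (Fin (m + 1) → ℝ) × (Fin (m + 1) → ℝ) |
    hopEnergy m R z.1 + pathEnergy m z.2 ≤ a} = _
  rw [Measure.volume_eq_prod, ← measure_preimage_add_right _ (equispacedRelays m R, 0), hset,
    Measure.addHaar_preimage_linearMap _ (by rw [hdet]; positivity), ← Measure.volume_eq_prod,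
    volume_prod_setOf_sum_sq_le (sub_nonneg.2 ha.le), hdet, Fintype.card_fin,
    ← ENNReal.ofReal_mul (by positivity), Nat.factorial_succ (m + 1)]
  congr 1
  rw [abs_of_pos (by positivity)]
  push_cast
  field_simp
  ring

/-- The Lebesgue measure in ℝ^{2(m+1)} of the sublevel set
{Z : d(Z) ≤ a} of the sum-of-squared-hop-distances statistic equals
π^{m+1} (a − R²/(m+2))^{m+1} / (m+2)!.  (Here there are m+1 relays, covering
all cases with at least one relay.) -/
theorem volume_dm_sublevel (m : ℕ) (R a : ℝ) (hR : 0 ≤ R)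
    (ha : R ^ 2 / (m + 2) < a) :
    volume {z : (Fin (m + 1) → ℝ) × (Fin (m + 1) → ℝ) |
        (z.1 0 + R / 2) ^ 2 + (∑ i : Fin m, (z.1 i.succ - z.1 i.castSucc) ^ 2) +
            (z.1 (Fin.last m) - R / 2) ^ 2 +
          ((z.2 0) ^ 2 + (∑ i : Fin m, (z.2 i.succ - z.2 i.castSucc) ^ 2) +
            (z.2 (Fin.last m)) ^ 2) ≤ a} =
      ENNReal.ofReal
        (Real.pi ^ (m + 1) * (a - R ^ 2 / (m + 2)) ^ (m + 1) /
          (Nat.factorial (m + 2))) :=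
  volume_dm_sublevel_general m R a ha
end

section
/- Setting the single-hop relation ε = 1 − G exp(−λγK R^2) and solving for the density yields λγ(1−ε) = (1−ε)/(KR^2) · ln(G/(1−ε)); hence the transmission-capacity upper bound for predetermined m-relay routing, obtained by setting λγ(1−ε)/(m+1) equal to its maximum subject to 1−ε ≤ G exp(−λγKR^2/(m+1)), equals (1−ε)/(KR^2) · ln(G/(1−ε)), independent of m. -/
/-!
Taking logarithms turns the success constraint `1 - ε ≤ G e^{-λγKR²/(m+1)}` into the linear
bound `λγKR²/(m+1) ≤ log (G/(1-ε))`. The normalized density `λγ(1-ε)/(m+1)` is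
`(1-ε)/(KR²)` times the left-hand side, so its maximum is reached where the bound is tight and
does not depend on `m`; the single-hop equation is the case `m = 0` with equality.
-/

open Real

lemma le_mul_exp_neg_iff_le_log_div {a G t : ℝ} (ha : 0 < a) (hG : 0 < G) :
    a ≤ G * exp (-t) ↔ t ≤ log (G / a) := by
  rw [le_log_iff_exp_le (div_pos hG ha), le_div_iff₀ ha, exp_neg, ← div_eq_mul_inv,
    le_div_iff₀ (exp_pos t), mul_comm]

lemma eq_log_div_of_eq_mul_exp_neg {a G t : ℝ} (ha : 0 < a) (h : a = G * exp (-t)) :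
    t = log (G / a) := by
  have hG : G ≠ 0 := by
    rintro rfl
    rw [zero_mul] at h
    exact ha.ne' h
  have hGa : G / a = exp t := by
    rw [h, exp_neg]
    field_simp
  rw [hGa, log_exp]

theorem predetermined_routing_no_gain_general (G K R γ ε : ℝ)
    (hK : 0 < K) (hR : 0 < R) (hγ0 : 0 < γ)
    (hε1 : ε < 1) (hG : 1 - ε ≤ G) :
    (∀ lam : ℝ, 1 - ε = G * Real.exp (-(lam * γ * K) * R ^ 2) →
      lam * γ * (1 - ε) = (1 - ε) / (K * R ^ 2) * Real.log (G / (1 - ε))) ∧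
    (∀ m : ℕ,
      IsGreatest
        {x : ℝ | ∃ lam : ℝ, 0 ≤ lam ∧
          1 - ε ≤ G * Real.exp (-(lam * γ * K) * R ^ 2 / (m + 1)) ∧
          x = lam * γ * (1 - ε) / (m + 1)}
        ((1 - ε) / (K * R ^ 2) * Real.log (G / (1 - ε)))) := by
  have hq : 0 < 1 - ε := by linarith
  have hG0 : 0 < G := hq.trans_le hG
  have hc : 0 < K * R ^ 2 := by positivity
  have hL : 0 ≤ log (G / (1 - ε)) := log_nonneg ((one_le_div hq).2 hG)
  refine ⟨fun lam h => ?_, fun m => ?_⟩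
  · rw [show -(lam * γ * K) * R ^ 2 = -(lam * γ * (K * R ^ 2)) by ring] at h
    rw [← eq_log_div_of_eq_mul_exp_neg hq h]
    field_simp
  have hexp : ∀ lam : ℝ,
      -(lam * γ * K) * R ^ 2 / (m + 1) = -(lam * γ * (K * R ^ 2) / (m + 1)) :=
    fun _ => by ring
  simp only [hexp, le_mul_exp_neg_iff_le_log_div hq hG0]
  refine ⟨⟨(m + 1) * log (G / (1 - ε)) / (γ * (K * R ^ 2)), by positivity, ?_, ?_⟩, ?_⟩
  · exact le_of_eq (by field_simp)
  · field_simp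
  · rintro x ⟨lam, -, hlam, rfl⟩
    calc lam * γ * (1 - ε) / (m + 1)
        = (1 - ε) / (K * R ^ 2) * (lam * γ * (K * R ^ 2) / (m + 1)) := by field_simp
      _ ≤ (1 - ε) / (K * R ^ 2) * log (G / (1 - ε)) := by gcongr

/-- Predetermined multihop routing gives no throughput gain over single hop:
(1) solving 1−ε = G e^{−λγKR²} gives λγ(1−ε) = (1−ε)/(KR²)·ln(G/(1−ε));
(2) for any number of relays m, the greatest achievable normalized density
λγ(1−ε)/(m+1) subject to 1−ε ≤ G e^{−λγKR²/(m+1)}, λ ≥ 0, equals the same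
single-hop value (1−ε)/(KR²)·ln(G/(1−ε)), independent of m. -/
theorem predetermined_routing_no_gain (G K R γ ε : ℝ)
    (hK : 0 < K) (hR : 0 < R) (hγ0 : 0 < γ) (hγ1 : γ < 1)
    (hε0 : 0 < ε) (hε1 : ε < 1) (hG : 1 - ε ≤ G) :
    (∀ lam : ℝ, 1 - ε = G * Real.exp (-(lam * γ * K) * R ^ 2) →
      lam * γ * (1 - ε) = (1 - ε) / (K * R ^ 2) * Real.log (G / (1 - ε))) ∧
    (∀ m : ℕ,
      IsGreatest
        {x : ℝ | ∃ lam : ℝ, 0 ≤ lam ∧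
          1 - ε ≤ G * Real.exp (-(lam * γ * K) * R ^ 2 / (m + 1)) ∧
          x = lam * γ * (1 - ε) / (m + 1)}
        ((1 - ε) / (K * R ^ 2) * Real.log (G / (1 - ε)))) :=
  predetermined_routing_no_gain_general G K R γ ε hK hR hγ0 hε1 hG
end
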